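/- arXiv:0810.1736 — 2 statements merged into one kernel-verified Lean document; each statement's English description precedes it below -/
import Mathlib

section
/- If A is strictly diagonally dominant, then the Jacobi iteration matrix J = -D⁻¹(A - D), where D = diag(A), satisfies ‖J‖_∞ < 1 (maximum absolute row sum norm), and hence the Jacobi iteration x^{(t+1)} = D⁻¹(b - (A-D)x^{(t)}) converges to the solution of Ax = b from any starting point. -/
open Matrix Filter Topology

attribute [local instance] Matrix.linftyOpNormedAddCommGroup

theorem jacobi_convergence_sdd (n : ℕ) (A : Matrix (Fin n) (Fin n) ℝ)
    (hdom : ∀ i, ∑ j ∈ Finset.univ.erase i, |A i j| < |A i i|)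
    (b : Fin n → ℝ)
    (D : Matrix (Fin n) (Fin n) ℝ) (hD : D = Matrix.diagonal (fun i => A i i))
    (J : Matrix (Fin n) (Fin n) ℝ) (hJ : J = -(D⁻¹ * (A - D))) :
    ‖J‖ < 1 ∧
      ∀ x₀ : Fin n → ℝ,
        Tendsto (fun t => (fun x : Fin n → ℝ => D⁻¹.mulVec (b - (A - D).mulVec x))^[t] x₀)
          atTop (𝓝 (A⁻¹.mulVec b)) := by
  have hii : ∀ i, A i i ≠ 0 := by
    intro i h
    have h1 := hdom i
    rw [h, abs_zero] at h1
    exact absurd h1 (not_lt.mpr (Finset.sum_nonneg fun j _ => abs_nonneg _))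
  have hDinv : D⁻¹ = Matrix.diagonal (fun i => (A i i)⁻¹) := by
    refine Matrix.inv_eq_right_inv ?_
    rw [hD, Matrix.diagonal_mul_diagonal]
    have h1 : (fun i => A i i * (A i i)⁻¹) = fun _ => (1 : ℝ) :=
      funext fun i => mul_inv_cancel₀ (hii i)
    rw [h1, Matrix.diagonal_one]
  have hJentry : ∀ i j, |J i j| = |A i i|⁻¹ * |(A - D) i j| := by
    intro i j
    rw [hJ, hDinv]
    simp [Matrix.neg_apply, Matrix.diagonal_mul, abs_mul, abs_inv]
  have hrow : ∀ i, ∑ j, |J i j| < 1 := by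
    intro i
    have hS : ∑ j, |(A - D) i j| = ∑ j ∈ Finset.univ.erase i, |A i j| := by
      rw [← Finset.sum_erase_add _ _ (Finset.mem_univ i)]
      have h0 : (A - D) i i = 0 := by simp [hD]
      rw [h0, abs_zero, add_zero]
      refine Finset.sum_congr rfl fun j hj => ?_
      have hji : j ≠ i := Finset.ne_of_mem_erase hj
      simp [hD, Matrix.diagonal_apply_ne' _ hji]
    calc ∑ j, |J i j| = |A i i|⁻¹ * ∑ j, |(A - D) i j| := by
          rw [Finset.mul_sum]; exact Finset.sum_congr rfl fun j _ => hJentry i j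
      _ < 1 := by
          rw [hS, inv_mul_lt_iff₀ (abs_pos.mpr (hii i)), mul_one]
          exact hdom i
  have hnorm : ‖J‖ < 1 := by
    rw [Matrix.linfty_opNorm_def]
    rw [show (1 : ℝ) = ((1 : NNReal) : ℝ) by norm_num, NNReal.coe_lt_coe]
    rw [Finset.sup_lt_iff (show (⊥ : NNReal) < 1 by norm_num)]
    intro i _
    rw [← NNReal.coe_lt_coe, NNReal.coe_sum]
    simpa [Real.norm_eq_abs] using hrow i
  refine ⟨hnorm, fun x₀ => ?_⟩
  have hdetA : A.det ≠ 0 := det_ne_zero_of_sum_row_lt_diag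
    (by simpa [Real.norm_eq_abs] using hdom)
  have hdetD : D.det ≠ 0 := by
    rw [hD, Matrix.det_diagonal]
    exact Finset.prod_ne_zero_iff.mpr fun i _ => hii i
  set f : (Fin n → ℝ) → (Fin n → ℝ) := fun x => D⁻¹.mulVec (b - (A - D).mulVec x) with hf
  have hfx : ∀ x, f x = D⁻¹.mulVec b + J.mulVec x := by
    intro x
    show D⁻¹.mulVec (b - (A - D).mulVec x) = _
    rw [Matrix.mulVec_sub, Matrix.mulVec_mulVec, hJ, Matrix.neg_mulVec, sub_eq_add_neg]
  have hKlt : (‖J‖₊ : NNReal) < 1 := by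
    rw [← NNReal.coe_lt_one, coe_nnnorm]; exact hnorm
  have hlip : LipschitzWith ‖J‖₊ f := by
    refine LipschitzWith.of_dist_le_mul fun x y => ?_
    rw [dist_eq_norm, dist_eq_norm, hfx, hfx]
    have heq : (D⁻¹.mulVec b + J.mulVec x) - (D⁻¹.mulVec b + J.mulVec y)
        = J.mulVec (x - y) := by
      rw [Matrix.mulVec_sub]; abel
    rw [heq]
    exact Matrix.linfty_opNorm_mulVec J (x - y)
  have hc : ContractingWith ‖J‖₊ f := ⟨hKlt, hlip⟩
  have hAb : A.mulVec (A⁻¹.mulVec b) = b := by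
    rw [Matrix.mulVec_mulVec, Matrix.mul_nonsing_inv A (Ne.isUnit hdetA), Matrix.one_mulVec]
  have hxstar : Function.IsFixedPt f (A⁻¹.mulVec b) := by
    show D⁻¹.mulVec (b - (A - D).mulVec (A⁻¹.mulVec b)) = A⁻¹.mulVec b
    rw [Matrix.sub_mulVec, hAb]
    have : b - (b - D.mulVec (A⁻¹.mulVec b)) = D.mulVec (A⁻¹.mulVec b) := by abel
    rw [this, Matrix.mulVec_mulVec, Matrix.nonsing_inv_mul D (Ne.isUnit hdetD),
      Matrix.one_mulVec]
  have htend := hc.tendsto_iterate_fixedPoint x₀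
  rwa [← hc.fixedPoint_unique hxstar] at htend
end

section
/- If a real sequence (x_n) converges linearly to x̂ with asymptotic ratio a, |a| < 1, a ≠ 0, and x_n ≠ x̂ for all n, and the Aitken denominators x_{n+2} - 2x_{n+1} + x_n are nonzero, then the Aitken-accelerated sequence y_n = x_n - (x_{n+1} - x_n)²/(x_{n+2} - 2x_{n+1} + x_n) converges to x̂ faster, i.e., lim_{n→∞} (y_n - x̂)/(x_n - x̂) = 0. -/
open Filter Topology

theorem aitken_acceleration (x : ℕ → ℝ) (L a : ℝ)
    (ha0 : a ≠ 0) (ha1 : |a| < 1)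
    (hx : ∀ n, x n ≠ L)
    (hlin : Tendsto (fun n => (x (n + 1) - L) / (x n - L)) atTop (𝓝 a))
    (hden : ∀ n, x (n + 2) - 2 * x (n + 1) + x n ≠ 0)
    (y : ℕ → ℝ)
    (hy : ∀ n, y n = x n - (x (n + 1) - x n) ^ 2 / (x (n + 2) - 2 * x (n + 1) + x n)) :
    Tendsto (fun n => (y n - L) / (x n - L)) atTop (𝓝 0) := by
  set g : ℕ → ℝ := fun n => (x (n + 1) - L) / (x n - L) with hg
  have he : ∀ n, x n - L ≠ 0 := fun n => sub_ne_zero.mpr (hx n)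
  have ha1' : a - 1 ≠ 0 := by
    intro h
    have : a = 1 := by linarith
    rw [this] at ha1; norm_num at ha1
  have hgD : ∀ n, g (n + 1) * g n - 2 * g n + 1 = (x (n + 2) - 2 * x (n + 1) + x n) / (x n - L) := by
    intro n
    show (x (n + 1 + 1) - L) / (x (n + 1) - L) * ((x (n + 1) - L) / (x n - L))
        - 2 * ((x (n + 1) - L) / (x n - L)) + 1 = _
    field_simp [he n, he (n + 1)]
    ring
  have hgD0 : ∀ n, g (n + 1) * g n - 2 * g n + 1 ≠ 0 := by
    intro n
    rw [hgD n]
    exact div_ne_zero (hden n) (he n)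
  have key : ∀ n, (y n - L) / (x n - L)
      = 1 - (g n - 1) ^ 2 / (g (n + 1) * g n - 2 * g n + 1) := by
    intro n
    rw [hy n, hgD n]
    show _ = 1 - ((x (n + 1) - L) / (x n - L) - 1) ^ 2 / _
    field_simp [he n, he (n + 1), hden n]
    ring
  have hD0 : a * a - 2 * a + 1 ≠ 0 := by
    rw [show a * a - 2 * a + 1 = (a - 1) ^ 2 by ring]
    exact pow_ne_zero 2 ha1'
  have hzero : (0 : ℝ) = 1 - (a - 1) ^ 2 / (a * a - 2 * a + 1) := by
    rw [show a * a - 2 * a + 1 = (a - 1) ^ 2 by ring,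
      div_self (pow_ne_zero 2 ha1')]
    ring
  rw [hzero]
  simp only [key]
  have hg1 : Tendsto (fun n => g (n + 1)) atTop (𝓝 a) :=
    hlin.comp (tendsto_add_atTop_nat 1)
  have hD : Tendsto (fun n => g (n + 1) * g n - 2 * g n + 1) atTop (𝓝 (a * a - 2 * a + 1)) :=
    ((hg1.mul hlin).sub (hlin.const_mul 2)).add tendsto_const_nhds
  have hN : Tendsto (fun n => (g n - 1) ^ 2) atTop (𝓝 ((a - 1) ^ 2)) :=
    (hlin.sub tendsto_const_nhds).pow 2
  exact tendsto_const_nhds.sub (hN.div hD hD0)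
end
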